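/- arXiv:2211.12317 — 5 statements merged into one kernel-verified Lean document; each statement's English description precedes it below -/
import Mathlib

section
/- Let (X, τ) be a T₀ space. The collection τ_{SI₂}(X) of all weakly irreducibly open sets, i.e., sets U ∈ τ such that for every irreducible set F ⊆ X, F^δ ∩ U ≠ ∅ implies F ∩ U ≠ ∅, is a topology on X. -/
open Set

variable {X : Type*} [TopologicalSpace X]

/-- Specialization order: `sle x y` iff `x ∈ closure {y}`. -/
def sle (x y : X) : Prop := x ∈ closure ({y} : Set X)

/-- Upper bounds w.r.t. the specialization order. -/
def ub (A : Set X) : Set X := {x | ∀ a ∈ A, sle a x}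

/-- Lower bounds w.r.t. the specialization order. -/
def lb (A : Set X) : Set X := {x | ∀ a ∈ A, sle x a}

/-- The cut `A^δ = (A^↑)^↓`. -/
def cut (A : Set X) : Set X := lb (ub A)

/-- Upper closure `↑A` w.r.t. the specialization order. -/
def up (A : Set X) : Set X := {x | ∃ a ∈ A, sle a x}

/-- Irreducible subsets of a topological space. -/
def Irred (F : Set X) : Prop :=
  F.Nonempty ∧ ∀ B C : Set X, IsClosed B → IsClosed C → F ⊆ B ∪ C → F ⊆ B ∨ F ⊆ C

/-- `wayBelow A B` is the relation `A ≪_r B`. -/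
def wayBelow (A B : Set X) : Prop :=
  ∀ E : Set X, Irred E → (B ∩ cut E).Nonempty → (up A ∩ E).Nonempty

/-- Weakly irreducibly open sets (the topology `τ_{SI₂}(X)`). -/
def WIOpen (U : Set X) : Prop :=
  IsOpen U ∧ ∀ F : Set X, Irred F → (cut F ∩ U).Nonempty → (F ∩ U).Nonempty

/-- `w x` is the family of finite nonempty sets way below `x`. -/
def wfam (x : X) : Set (Set X) := {F : Set X | F.Finite ∧ F.Nonempty ∧ wayBelow F {x}}

/-- `SI₂`-quasicontinuous spaces. -/
def SI2Quasicontinuous (X : Type*) [TopologicalSpace X] : Prop :=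
  ∀ x : X,
    ((wfam x).Nonempty ∧ DirectedOn (fun A B : Set X => B ⊆ up A) (wfam x)) ∧
    (up {x} = ⋂ F ∈ wfam x, up F) ∧
    (∀ H : Set X, H.Finite → H.Nonempty → IsOpen {y : X | wayBelow H {y}})

/-- `F` is a quasi-eventual lower bound of the net `xj`. -/
def QELB {J : Type*} [Preorder J] (xj : J → X) (F : Set X) : Prop :=
  ∃ k : J, ∀ j, k ≤ j → xj j ∈ up F

/-- `x` is a `𝒢𝒟`-limit of the net `xj`. -/
def GDLimit {J : Type*} [Preorder J] (xj : J → X) (x : X) : Prop :=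
  ∃ FF : Set (Set X), FF.Nonempty ∧ (∀ F ∈ FF, F.Finite ∧ F.Nonempty) ∧
    DirectedOn (fun A B : Set X => B ⊆ up A) FF ∧
    (∀ F ∈ FF, QELB xj F) ∧ (⋂ F ∈ FF, up F) ⊆ up {x}

/-- The weakly irreducibly open sets of a T₀ space form a topology. -/
theorem stmt3 [T0Space X] :
    WIOpen (Set.univ : Set X) ∧
    (∀ U V : Set X, WIOpen U → WIOpen V → WIOpen (U ∩ V)) ∧
    (∀ S : Set (Set X), (∀ U ∈ S, WIOpen U) → WIOpen (⋃₀ S)) := by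
  refine ⟨⟨isOpen_univ, fun F hF _ => ?_⟩, ?_, ?_⟩
  · simpa using hF.1
  · rintro U V ⟨hUo, hU⟩ ⟨hVo, hV⟩
    refine ⟨hUo.inter hVo, fun F hF ⟨x, hxc, hxU, hxV⟩ => ?_⟩
    -- F ∩ U is nonempty
    obtain ⟨a, haF, haU⟩ := hU F hF ⟨x, hxc, hxU⟩
    -- F ∩ U is irreducible
    have hFU : Irred (F ∩ U) := by
      refine ⟨⟨a, haF, haU⟩, fun B C hB hC hsub => ?_⟩
      have h1 : F ⊆ (B ∪ C) ∪ Uᶜ := by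
        intro z hz
        by_cases hzU : z ∈ U
        · exact Or.inl (hsub ⟨hz, hzU⟩)
        · exact Or.inr hzU
      rcases hF.2 (B ∪ C) Uᶜ (hB.union hC) hUo.isClosed_compl h1 with h | h
      · rcases hF.2 B C hB hC h with h | h
        · exact Or.inl (fun z hz => h hz.1)
        · exact Or.inr (fun z hz => h hz.1)
      · exact absurd (h haF) (by simpa using haU)
    -- x ∈ cut (F ∩ U)
    have hxcFU : x ∈ cut (F ∩ U) := by
      intro y hy
      -- claim y ∈ ub F
      have hyF : y ∈ ub F := by
        intro z hz
        have h1 : F ⊆ closure {y} ∪ Uᶜ := by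
          intro w hw
          by_cases hwU : w ∈ U
          · exact Or.inl (hy w ⟨hw, hwU⟩)
          · exact Or.inr hwU
        rcases hF.2 (closure {y}) Uᶜ isClosed_closure hUo.isClosed_compl h1 with h | h
        · exact h hz
        · exact absurd (h haF) (by simpa using haU)
      exact hxc y hyF
    -- apply V's property
    obtain ⟨b, ⟨hbF, hbU⟩, hbV⟩ := hV (F ∩ U) hFU ⟨x, hxcFU, hxV⟩
    exact ⟨b, hbF, hbU, hbV⟩
  · intro S hS
    refine ⟨isOpen_sUnion fun U hU => (hS U hU).1, fun F hF ⟨x, hxc, hxU⟩ => ?_⟩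
    obtain ⟨U, hUS, hxUm⟩ := hxU
    obtain ⟨a, haF, haU⟩ := (hS U hUS).2 F hF ⟨x, hxc, hxUm⟩
    exact ⟨a, haF, U, hUS, haU⟩
end

section
/- Rudin's Lemma: Let 𝓕 be a directed family of nonempty finite subsets of a poset P (directed with respect to the order F ≤ G iff G ⊆ ↑F). Then there exists a directed subset D of ⋃𝓕 such that D ∩ F ≠ ∅ for every F ∈ 𝓕. -/
open Set

/-- Rudin's Lemma: a directed family of nonempty finite subsets of a poset admits a
directed set `D ⊆ ⋃𝓕` meeting every member of the family. -/
theorem stmt8 {P : Type*} [PartialOrder P] (FF : Set (Set P))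
    (hne : FF.Nonempty) (hfin : ∀ F ∈ FF, F.Finite ∧ F.Nonempty)
    (hdir : DirectedOn (fun F G : Set P => G ⊆ {x | ∃ a ∈ F, a ≤ x}) FF) :
    ∃ D : Set P, D ⊆ ⋃₀ FF ∧ D.Nonempty ∧ DirectedOn (· ≤ ·) D ∧
      ∀ F ∈ FF, (D ∩ F).Nonempty := by
  set X : Set P := ⋃₀ FF with hX
  set S : Set (Set P) :=
    {M | M ⊆ X ∧ (∀ y ∈ X, ∀ x ∈ M, y ≤ x → y ∈ M) ∧ ∀ F ∈ FF, (M ∩ F).Nonempty} with hS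
  have hXS : X ∈ S := by
    refine ⟨Subset.rfl, fun y hy _ _ _ => hy, fun F hF => ?_⟩
    obtain ⟨a, ha⟩ := (hfin F hF).2
    exact ⟨a, ⟨F, hF, ha⟩, ha⟩
  -- Zorn's lemma: chains of members of S have a lower bound in S
  obtain ⟨M, -, hMS, hMmin⟩ : ∃ M, M ⊆ X ∧ Minimal (· ∈ S) M := by
    refine zorn_superset_nonempty S (fun c hcS hc hcne => ⟨⋂₀ c, ⟨?_, ?_, ?_⟩, fun s hs => sInter_subset_of_mem hs⟩) X hXS
    · obtain ⟨M, hM⟩ := hcne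
      exact (sInter_subset_of_mem hM).trans (hcS hM).1
    · intro y hy x hx hyx
      exact mem_sInter.2 fun M hM => (hcS hM).2.1 y hy x (mem_sInter.1 hx M hM) hyx
    · intro F hF
      -- pick a member of the chain minimizing the (finite) cardinality of M ∩ F
      have hFfin := (hfin F hF).1
      obtain ⟨M₀, hM₀c⟩ := hcne
      have hne' : ∃ n, ∃ M ∈ c, (M ∩ F).ncard = n := ⟨_, M₀, hM₀c, rfl⟩
      classical
      obtain ⟨M₁, hM₁c, hM₁n⟩ := Nat.find_spec hne'
      have key : ∀ M ∈ c, M₁ ∩ F ⊆ M ∩ F := by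
        intro M hMc
        rcases hc.total hM₁c hMc with h | h
        · exact inter_subset_inter_left F h
        · have hsub : M ∩ F ⊆ M₁ ∩ F := inter_subset_inter_left F h
          have hle : (M₁ ∩ F).ncard ≤ (M ∩ F).ncard :=
            hM₁n ▸ Nat.find_min' hne' ⟨M, hMc, rfl⟩
          rw [Set.eq_of_subset_of_ncard_le hsub hle
            (hFfin.subset inter_subset_right)]
      obtain ⟨a, haM₁, haF⟩ := (hcS hM₁c).2.2 F hF
      exact ⟨a, mem_sInter.2 fun M hM => (key M hM ⟨haM₁, haF⟩).1, haF⟩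
  obtain ⟨hMX, hMlow, hMint⟩ := hMS
  -- key consequence of minimality: for each x ∈ M there is F with M ∩ F ⊆ ↑x
  have hkey : ∀ x ∈ M, ∃ F ∈ FF, ∀ a ∈ M ∩ F, x ≤ a := by
    intro x hx
    by_contra hcon
    push_neg at hcon
    set M' : Set P := {m ∈ M | ¬ x ≤ m} with hM'
    have hM'S : M' ∈ S := by
      refine ⟨fun m hm => hMX hm.1, fun y hy m hm hym => ⟨hMlow y hy m hm.1 hym, fun hxy => hm.2 (hxy.trans hym)⟩, fun F hF => ?_⟩
      obtain ⟨a, ⟨haM, haF⟩, hxa⟩ := hcon F hF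
      exact ⟨a, ⟨haM, hxa⟩, haF⟩
    have hsub : M ⊆ M' := hMmin hM'S (fun m hm => hm.1)
    exact (hsub hx).2 le_rfl
  have hdirM : DirectedOn (· ≤ ·) M := by
    intro x hx y hy
    obtain ⟨F₁, hF₁, hub₁⟩ := hkey x hx
    obtain ⟨F₂, hF₂, hub₂⟩ := hkey y hy
    obtain ⟨G, hG, hGF₁, hGF₂⟩ := hdir F₁ hF₁ F₂ hF₂
    obtain ⟨z, hzM, hzG⟩ := hMint G hG
    obtain ⟨a, haF₁, haz⟩ := hGF₁ hzG
    obtain ⟨b, hbF₂, hbz⟩ := hGF₂ hzG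
    have haM : a ∈ M := hMlow a ⟨F₁, hF₁, haF₁⟩ z hzM haz
    have hbM : b ∈ M := hMlow b ⟨F₂, hF₂, hbF₂⟩ z hzM hbz
    exact ⟨z, hzM, (hub₁ a ⟨haM, haF₁⟩).trans haz, (hub₂ b ⟨hbM, hbF₂⟩).trans hbz⟩
  obtain ⟨F₀, hF₀⟩ := hne
  obtain ⟨m, hm, -⟩ := hMint F₀ hF₀
  exact ⟨M, hMX, ⟨m, hm⟩, hdirM, hMint⟩
end

section
/- Let 𝓕 be a directed family (under reverse inclusion of upper closures) of nonempty finite sets in a T₀ space X, let x ∈ X and G ⊆ X. If G ≪_r x and ⋂_{F∈𝓕} ↑F ⊆ ↑x, then there exists F ∈ 𝓕 with F ⊆ ↑G. -/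
open Set

variable {X : Type*} [TopologicalSpace X]

private lemma sle_refl' (x : X) : sle x x := subset_closure rfl

private lemma sle_trans' {x y z : X} (h1 : sle x y) (h2 : sle y z) : sle x z :=
  (closure_minimal (singleton_subset_iff.2 h2) isClosed_closure) h1

/-- A chain of sets, each meeting a finite set `F`, has intersection meeting `F`. -/
private lemma chain_inter {F : Set X} (hF : F.Finite) {c : Set (Set X)}
    (hc : IsChain (· ⊆ ·) c) (hcne : c.Nonempty)
    (h : ∀ M ∈ c, (M ∩ F).Nonempty) : (⋂₀ c ∩ F).Nonempty := by
  classical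
  set s : Set (Set X) := (fun M => M ∩ F) '' c with hs
  have hsfin : s.Finite := hF.finite_subsets.subset (by
    rintro t ⟨M, _, rfl⟩; exact inter_subset_right)
  have hsne : s.Nonempty := hcne.image _
  obtain ⟨m, hm, hmin⟩ := hsfin.exists_minimal hsne
  obtain ⟨M₀, hM₀, rfl⟩ := hm
  obtain ⟨a, haM, haF⟩ := h M₀ hM₀
  refine ⟨a, mem_sInter.2 fun M hM => ?_, haF⟩
  rcases hc.total hM₀ hM with h1 | h1
  · exact h1 haM
  · have h2 : M ∩ F ⊆ M₀ ∩ F := inter_subset_inter_left _ h1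
    have h3 : M₀ ∩ F ⊆ M ∩ F := hmin ⟨M, hM, rfl⟩ h2
    exact (h3 ⟨haM, haF⟩).1

/-- Rudin's Lemma. -/
private lemma rudin (FF : Set (Set X)) (hne : FF.Nonempty)
    (hfin : ∀ F ∈ FF, F.Finite) (hnonemp : ∀ F ∈ FF, F.Nonempty)
    (hdir : DirectedOn (fun A B : Set X => B ⊆ up A) FF) :
    ∃ D : Set X, D ⊆ ⋃₀ FF ∧ (∀ F ∈ FF, (D ∩ F).Nonempty) ∧
      DirectedOn (fun a b : X => sle a b) D := by
  classical
  set S : Set (Set X) := {M | M ⊆ ⋃₀ FF ∧ (∀ F ∈ FF, (M ∩ F).Nonempty) ∧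
      ∀ F ∈ FF, ∀ F' ∈ FF, F' ⊆ up F → M ∩ F' ⊆ up (M ∩ F)} with hS
  have htop : (⋃₀ FF) ∈ S := by
    refine ⟨Subset.rfl, fun F hF => ?_, fun F hF F' hF' hsub y hy => ?_⟩
    · obtain ⟨a, ha⟩ := hnonemp F hF
      exact ⟨a, ⟨F, hF, ha⟩, ha⟩
    · obtain ⟨b, hb, hby⟩ := hsub hy.2
      exact ⟨b, ⟨⟨F, hF, hb⟩, hb⟩, hby⟩
  obtain ⟨M, -, hMS, hmin⟩ : ∃ M, M ⊆ ⋃₀ FF ∧ Minimal (· ∈ S) M := by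
    refine zorn_superset_nonempty S ?_ _ htop
    intro c hcS hchain hcne
    refine ⟨⋂₀ c, ⟨?_, fun F hF => ?_, ?_⟩, fun s hs => sInter_subset_of_mem hs⟩
    · obtain ⟨M, hM⟩ := hcne
      exact (sInter_subset_of_mem hM).trans (hcS hM).1
    · exact chain_inter (hfin F hF) hchain hcne (fun M hM => (hcS hM).2.1 F hF)
    · intro F hF F' hF' hsub y hy
      have key : ∀ M ∈ c, (M ∩ {f ∈ F | sle f y}).Nonempty := by
        intro M hM
        obtain ⟨f, hf, hfy⟩ :=
          (hcS hM).2.2 F hF F' hF' hsub ⟨(mem_sInter.1 hy.1) M hM, hy.2⟩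
        exact ⟨f, hf.1, hf.2, hfy⟩
      have hTfin : ({f ∈ F | sle f y} : Set X).Finite := (hfin F hF).subset (sep_subset _ _)
      obtain ⟨f, hf1, hf2, hf3⟩ := chain_inter hTfin hchain hcne key
      exact ⟨f, ⟨hf1, hf2⟩, hf3⟩
  obtain ⟨hMsub, hMne, hMcond⟩ := hMS
  have claim : ∀ a ∈ M, ∃ F ∈ FF, M ∩ F ⊆ up ({a} : Set X) := by
    intro a ha
    by_contra hcon
    push_neg at hcon
    set N := M \ up ({a} : Set X) with hN
    have hNS : N ∈ S := by
      refine ⟨(diff_subset).trans hMsub, fun F hF => ?_, ?_⟩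
      · obtain ⟨b, hb, hbn⟩ := not_subset.1 (hcon F hF)
        exact ⟨b, ⟨hb.1, hbn⟩, hb.2⟩
      · intro F hF F' hF' hsub y hy
        obtain ⟨f, hf, hfy⟩ := hMcond F hF F' hF' hsub ⟨hy.1.1, hy.2⟩
        have hfnot : f ∉ up ({a} : Set X) := by
          rintro ⟨a', rfl, haf⟩
          exact hy.1.2 ⟨a', rfl, sle_trans' haf hfy⟩
        exact ⟨f, ⟨⟨hf.1, hfnot⟩, hf.2⟩, hfy⟩
    have hNM : M ⊆ N := hmin hNS diff_subset
    exact (hNM ha).2 ⟨a, rfl, sle_refl' a⟩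
  refine ⟨M, hMsub, hMne, ?_⟩
  intro a ha b hb
  obtain ⟨Fa, hFa, hFa2⟩ := claim a ha
  obtain ⟨Fb, hFb, hFb2⟩ := claim b hb
  obtain ⟨F, hF, hF1, hF2⟩ := hdir Fa hFa Fb hFb
  obtain ⟨d, hdM, hdF⟩ := hMne F hF
  obtain ⟨fa, hfa, hfad⟩ := hMcond Fa hFa F hF hF1 ⟨hdM, hdF⟩
  obtain ⟨fb, hfb, hfbd⟩ := hMcond Fb hFb F hF hF2 ⟨hdM, hdF⟩
  obtain ⟨a', ha', had⟩ := hFa2 hfa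
  obtain ⟨b', hb', hbd⟩ := hFb2 hfb
  rcases ha' with rfl
  rcases hb' with rfl
  exact ⟨d, hdM, sle_trans' had hfad, sle_trans' hbd hfbd⟩

/-- Directed sets are irreducible. -/
private lemma directed_irred (D : Set X) (hD : D.Nonempty)
    (hdir : DirectedOn (fun a b : X => sle a b) D) : Irred D := by
  refine ⟨hD, fun B C hB hC hBC => ?_⟩
  by_contra hcon
  push_neg at hcon
  obtain ⟨b, hbD, hbB⟩ := not_subset.1 hcon.1
  obtain ⟨c, hcD, hcC⟩ := not_subset.1 hcon.2
  obtain ⟨d, hdD, hbd, hcd⟩ := hdir b hbD c hcD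
  have hdown : ∀ (E : Set X), IsClosed E → ∀ {u v : X}, sle u v → v ∈ E → u ∈ E :=
    fun E hE u v huv hv => (closure_minimal (singleton_subset_iff.2 hv) hE) huv
  rcases hBC hdD with h | h
  · exact hbB (hdown B hB hbd h)
  · exact hcC (hdown C hC hcd h)

/-- If `G ≪_r x` and a directed family of nonempty finite sets satisfies
`⋂ ↑F ⊆ ↑x`, then some member of the family is contained in `↑G`. -/
theorem stmt9 [T0Space X] (FF : Set (Set X)) (hne : FF.Nonempty)
    (hfin : ∀ F ∈ FF, F.Finite ∧ F.Nonempty)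
    (hdir : DirectedOn (fun A B : Set X => B ⊆ up A) FF)
    (x : X) (G : Set X) (hG : wayBelow G {x})
    (hsub : (⋂ F ∈ FF, up F) ⊆ up {x}) :
    ∃ F ∈ FF, F ⊆ up G := by
  by_contra hcon
  push_neg at hcon
  set FF' : Set (Set X) := (fun F => F \ up G) '' FF with hFF'
  have hsleG : ∀ {a b : X}, sle a b → a ∈ up G → b ∈ up G := by
    rintro a b hab ⟨g, hg, hga⟩
    exact ⟨g, hg, sle_trans' hga hab⟩
  have hstep : ∀ {F₁ F : Set X}, F ⊆ up F₁ → F \ up G ⊆ up (F₁ \ up G) := by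
    rintro F₁ F h1 a ⟨haF, haG⟩
    obtain ⟨b, hb, hba⟩ := h1 haF
    exact ⟨b, ⟨hb, fun hbG => haG (hsleG hba hbG)⟩, hba⟩
  have hdir' : DirectedOn (fun A B : Set X => B ⊆ up A) FF' := by
    rintro _ ⟨F₁, hF₁, rfl⟩ _ ⟨F₂, hF₂, rfl⟩
    obtain ⟨F, hF, h1, h2⟩ := hdir F₁ hF₁ F₂ hF₂
    exact ⟨F \ up G, ⟨F, hF, rfl⟩, hstep h1, hstep h2⟩
  obtain ⟨D, hDsub, hDmeet, hDdir⟩ := rudin FF' (hne.image _)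
    (by rintro _ ⟨F, hF, rfl⟩; exact ((hfin F hF).1).subset diff_subset)
    (by rintro _ ⟨F, hF, rfl⟩
        obtain ⟨a, ha, hna⟩ := not_subset.1 (hcon F hF)
        exact ⟨a, ha, hna⟩)
    hdir'
  have hDne : D.Nonempty := by
    obtain ⟨F, hF⟩ := hne
    obtain ⟨d, hd, _⟩ := hDmeet _ ⟨F, hF, rfl⟩
    exact ⟨d, hd⟩
  have hxcut : x ∈ cut D := by
    intro u hu
    have hu' : u ∈ ⋂ F ∈ FF, up F := by
      refine mem_iInter₂.2 fun F hF => ?_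
      obtain ⟨d, hdD, hdF, -⟩ := hDmeet _ ⟨F, hF, rfl⟩
      exact ⟨d, hdF, hu d hdD⟩
    obtain ⟨x', hx', hxu⟩ := hsub hu'
    rcases hx' with rfl
    exact hxu
  obtain ⟨g, hgG, hgD⟩ := hG D (directed_irred D hDne hDdir) ⟨x, rfl, hxcut⟩
  obtain ⟨_, ⟨F, hF, rfl⟩, hgF⟩ := hDsub hgD
  exact hgF.2 hgG
end

section
/- Let 𝓕 be a directed family of nonempty finite sets in a T₀ space X, x ∈ X and U a weakly irreducibly open set. If x ∈ U and ⋂_{F∈𝓕} ↑F ⊆ ↑x, then F ⊆ U for some F ∈ 𝓕. -/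
open Set

variable {X : Type*} [TopologicalSpace X]

lemma sle_mem_closed {a b : X} {C : Set X}
    (hab : sle a b) (hb : b ∈ C) (hC : IsClosed C) : a ∈ C :=
  closure_minimal (Set.singleton_subset_iff.2 hb) hC hab

/-- If `x` lies in a weakly irreducibly open set `U` and a directed family of
nonempty finite sets satisfies `⋂ ↑F ⊆ ↑x`, then `F ⊆ U` for some `F ∈ 𝓕`. -/
theorem stmt16 [T0Space X] (FF : Set (Set X)) (hne : FF.Nonempty)
    (hfin : ∀ F ∈ FF, F.Finite ∧ F.Nonempty)
    (hdir : DirectedOn (fun A B : Set X => B ⊆ up A) FF)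
    (x : X) (U : Set X) (hU : WIOpen U) (hx : x ∈ U)
    (hsub : (⋂ F ∈ FF, up F) ⊆ up {x}) :
    ∃ F ∈ FF, F ⊆ U := by
  by_contra hcon
  push_neg at hcon
  set S : Set (Set X) := {C | IsClosed C ∧ C ⊆ Uᶜ ∧ ∀ F ∈ FF, (F ∩ C).Nonempty} with hSdef
  have hUc : Uᶜ ∈ S := by
    refine ⟨hU.1.isClosed_compl, subset_rfl, fun F hF => ?_⟩
    obtain ⟨a, haF, haU⟩ := Set.not_subset.mp (hcon F hF)
    exact ⟨a, haF, haU⟩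
  -- Zorn's lemma: a minimal closed subset of `Uᶜ` meeting every `F ∈ FF`
  have hZ : ∀ c ⊆ S, IsChain (· ⊆ ·) c → c.Nonempty → ∃ lb ∈ S, ∀ s ∈ c, lb ⊆ s := by
    intro c hcS hchain hcne
    refine ⟨⋂₀ c, ⟨isClosed_sInter fun C hC => (hcS hC).1, ?_, ?_⟩,
      fun s hs => Set.sInter_subset_of_mem hs⟩
    · obtain ⟨C, hC⟩ := hcne
      exact (Set.sInter_subset_of_mem hC).trans (hcS hC).2.1
    · intro F hF
      have hFfin : F.Finite := (hfin F hF).1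
      have hex : ∃ n, ∃ C ∈ c, (F ∩ C).ncard = n := ⟨_, hcne.choose, hcne.choose_spec, rfl⟩
      classical
      obtain ⟨n, ⟨C₀, hC₀c, hC₀n⟩, hmin⟩ := Nat.lt_wfRel.wf.has_min _ hex
      have hleast : ∀ C ∈ c, F ∩ C₀ ⊆ F ∩ C := by
        intro C hC
        rcases hchain.total hC₀c hC with h | h
        · exact Set.inter_subset_inter_right F h
        · have hsub2 : F ∩ C ⊆ F ∩ C₀ := Set.inter_subset_inter_right F h
          have hcard : (F ∩ C₀).ncard ≤ (F ∩ C).ncard := by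
            by_contra hlt
            push_neg at hlt
            rw [hC₀n] at hlt
            exact hmin _ ⟨C, hC, rfl⟩ hlt
          rw [Set.eq_of_subset_of_ncard_le hsub2 hcard (hFfin.inter_of_left _)]
      obtain ⟨a, ha⟩ := (hcS hC₀c).2.2 F hF
      exact ⟨a, ha.1, fun C hC => (hleast C hC ha).2⟩
  obtain ⟨A, -, hAmin⟩ := zorn_superset_nonempty S hZ Uᶜ hUc
  obtain ⟨hAcl, hAU, hAmeet⟩ := hAmin.1
  have key : ∀ D : Set X, IsClosed D → ¬ A ⊆ D → ∃ F ∈ FF, F ∩ (A ∩ D) = ∅ := by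
    intro D hD hnD
    by_contra h
    push_neg at h
    have hADS : A ∩ D ∈ S :=
      ⟨hAcl.inter hD, Set.inter_subset_left.trans hAU,
        fun F hF => h F hF⟩
    have hsub' : A ⊆ A ∩ D := hAmin.2 hADS Set.inter_subset_left
    exact hnD fun a ha => (hsub' ha).2
  have hIrr : Irred A := by
    constructor
    · obtain ⟨F₀, hF₀⟩ := hne
      obtain ⟨a, -, ha⟩ := hAmeet F₀ hF₀
      exact ⟨a, ha⟩
    · intro B C hB hC hBC
      by_contra hnot
      push_neg at hnot
      obtain ⟨F₁, hF₁, hF₁e⟩ := key B hB fun h => hnot.1 h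
      obtain ⟨F₂, hF₂, hF₂e⟩ := key C hC fun h => hnot.2 h
      obtain ⟨G, hG, hG1, hG2⟩ := hdir F₁ hF₁ F₂ hF₂
      obtain ⟨a, haG, haA⟩ := hAmeet G hG
      rcases hBC haA with haB | haC
      · obtain ⟨f, hfF₁, hfa⟩ := hG1 haG
        have : f ∈ F₁ ∩ (A ∩ B) :=
          ⟨hfF₁, sle_mem_closed hfa haA hAcl, sle_mem_closed hfa haB hB⟩
        rw [hF₁e] at this
        exact this
      · obtain ⟨f, hfF₂, hfa⟩ := hG2 haG
        have : f ∈ F₂ ∩ (A ∩ C) :=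
          ⟨hfF₂, sle_mem_closed hfa haA hAcl, sle_mem_closed hfa haC hC⟩
        rw [hF₂e] at this
        exact this
  have hxcut : x ∈ cut A := by
    intro u hu
    have hu' : u ∈ ⋂ F ∈ FF, up F := by
      refine Set.mem_iInter₂.2 fun F hF => ?_
      obtain ⟨a, haF, haA⟩ := hAmeet F hF
      exact ⟨a, haF, hu a haA⟩
    obtain ⟨a, haa, hax⟩ := hsub hu'
    rwa [Set.mem_singleton_iff.1 haa] at hax
  obtain ⟨a, haA, haU⟩ := hU.2 A hIrr ⟨x, hxcut, hx⟩
  exact hAU haA haU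
end

section
/- For a poset P, the weakly irreducible topology of the Alexandroff space (P, α(P)) coincides with the weak Scott topology σ₂(P): a subset U is weakly irreducibly open in (P, α(P)) if and only if U is an upper set such that for every directed set D, D^δ ∩ U ≠ ∅ implies D ∩ U ≠ ∅. -/
open Set

/-- The Alexandroff topology on a poset: the open sets are the upper sets. -/
def alex (P : Type*) [Preorder P] : TopologicalSpace P where
  IsOpen := IsUpperSet
  isOpen_univ := isUpperSet_univ
  isOpen_inter := fun _ _ => IsUpperSet.inter
  isOpen_sUnion := fun _ h => isUpperSet_sUnion h

/-- Irreducible sets of the Alexandroff space `(P, α(P))`. -/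
def IrredAlex {P : Type*} [Preorder P] (F : Set P) : Prop :=
  F.Nonempty ∧ ∀ B C : Set P, @IsClosed P (alex P) B → @IsClosed P (alex P) C →
    F ⊆ B ∪ C → F ⊆ B ∨ F ⊆ C

/-- The cut `A^δ = (A^↑)^↓` in a poset. -/
def cutP {P : Type*} [Preorder P] (A : Set P) : Set P :=
  lowerBounds (upperBounds A)

/-- Weakly irreducibly open sets of `(P, α(P))`. -/
def WIOpenAlex {P : Type*} [Preorder P] (U : Set P) : Prop :=
  @IsOpen P (alex P) U ∧ ∀ F : Set P, IrredAlex F → (cutP F ∩ U).Nonempty →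
    (F ∩ U).Nonempty

lemma isClosed_alex_iff {P : Type*} [Preorder P] (F : Set P) :
    @IsClosed P (alex P) F ↔ IsLowerSet F := by
  constructor
  · intro h
    exact isUpperSet_compl.1 h.isOpen_compl
  · intro h
    exact @IsClosed.mk P (alex P) F (isUpperSet_compl.2 h)

lemma irredAlex_iff {P : Type*} [Preorder P] (F : Set P) :
    IrredAlex F ↔ F.Nonempty ∧ DirectedOn (· ≤ ·) F := by
  constructor
  · rintro ⟨hne, h⟩
    refine ⟨hne, fun x hx y hy => ?_⟩
    have hB : @IsClosed P (alex P) {z | ¬ x ≤ z} :=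
      (isClosed_alex_iff _).2 fun a b hba ha hxa => ha (hxa.trans hba)
    have hC : @IsClosed P (alex P) {z | ¬ y ≤ z} :=
      (isClosed_alex_iff _).2 fun a b hba ha hya => ha (hya.trans hba)
    by_contra hz
    push_neg at hz
    have hsub : F ⊆ {z | ¬ x ≤ z} ∪ {z | ¬ y ≤ z} := by
      intro z hzF
      by_contra hzc
      simp only [mem_union, mem_setOf_eq, not_or, not_not] at hzc
      exact hz z hzF hzc.1 hzc.2
    rcases h _ _ hB hC hsub with hb | hc
    · exact (hb hx) le_rfl
    · exact (hc hy) le_rfl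
  · rintro ⟨hne, hdir⟩
    refine ⟨hne, fun B C hB hC hsub => ?_⟩
    by_contra hcon
    push_neg at hcon
    obtain ⟨⟨b, hbF, hbB⟩, ⟨c, hcF, hcC⟩⟩ :
        (∃ b ∈ F, b ∉ B) ∧ (∃ c ∈ F, c ∉ C) := by
      constructor
      · exact not_subset.1 hcon.1
      · exact not_subset.1 hcon.2
    rcases hdir b hbF c hcF with ⟨z, hzF, hbz, hcz⟩
    rcases hsub hzF with hz | hz
    · exact hbB ((isClosed_alex_iff B).1 hB hbz hz)
    · exact hcC ((isClosed_alex_iff C).1 hC hcz hz)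

/-- On a poset, the weakly irreducible topology of the Alexandroff space is exactly
the weak Scott topology `σ₂(P)`. -/
theorem stmt19 {P : Type*} [PartialOrder P] (U : Set P) :
    WIOpenAlex U ↔
      IsUpperSet U ∧ ∀ D : Set P, D.Nonempty → DirectedOn (· ≤ ·) D →
        (cutP D ∩ U).Nonempty → (D ∩ U).Nonempty := by
  constructor
  · rintro ⟨hopen, h⟩
    exact ⟨hopen, fun D hne hdir => h D ((irredAlex_iff D).2 ⟨hne, hdir⟩)⟩
  · rintro ⟨hup, h⟩
    refine ⟨hup, fun F hF => ?_⟩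
    rcases (irredAlex_iff F).1 hF with ⟨hne, hdir⟩
    exact h F hne hdir
end
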